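/- arXiv:math/0606427 — 6 statements merged into one kernel-verified Lean document; each statement's English description precedes it below -/
import Mathlib

section
/- Let O ⊆ ℝ^m be an open set and let a ∈ C¹(ℝ^m, ℝ^m) be such that det ∇a(x) ≠ 0 for every x ∈ O. Then a belongs to the class K_{1,loc}^O; that is, for every x ∈ O and every ϱ ∈ (0,1) there exists D > 0 such that for every v ∈ S_m there exists w = w(x,v) ∈ S_m with |⟨a(x+y) − a(x), v⟩| ≥ D·|⟨y,w⟩| for all y ∈ V(w,ϱ) with ‖y‖ < D. -/
open scoped RealInnerProductSpace
open MeasureTheory Filter Set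

/-- If `a ∈ C¹(ℝ^m, ℝ^m)` has non-degenerate Jacobian at every point of an open set `O`,
then `a` belongs to the class `K_{1,loc}^O`. -/
theorem nondeg_jacobian_mem_K1_loc (m : ℕ)
    (O : Set (EuclideanSpace ℝ (Fin m))) (hO : IsOpen O)
    (a : EuclideanSpace ℝ (Fin m) → EuclideanSpace ℝ (Fin m))
    (ha : ContDiff ℝ 1 a)
    (hdet : ∀ x ∈ O, LinearMap.det
      ((fderiv ℝ a x : EuclideanSpace ℝ (Fin m) →L[ℝ] EuclideanSpace ℝ (Fin m)) :
        EuclideanSpace ℝ (Fin m) →ₗ[ℝ] EuclideanSpace ℝ (Fin m)) ≠ 0) :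
    ∀ x ∈ O, ∀ ϱ ∈ Set.Ioo (0:ℝ) 1, ∃ D > (0:ℝ),
      ∀ v : EuclideanSpace ℝ (Fin m), ‖v‖ = 1 →
        ∃ w : EuclideanSpace ℝ (Fin m), ‖w‖ = 1 ∧
          ∀ y : EuclideanSpace ℝ (Fin m), ϱ * ‖y‖ ≤ |⟪y, w⟫| → ‖y‖ < D →
            D * |⟪y, w⟫| ≤ |⟪a (x + y) - a x, v⟫| := by
  intro x hx ϱ hϱ
  obtain ⟨hϱ0, hϱ1⟩ := hϱ
  by_cases hm : ∃ v : EuclideanSpace ℝ (Fin m), ‖v‖ = 1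
  swap
  · exact ⟨1, one_pos, fun v hv => absurd ⟨v, hv⟩ hm⟩
  obtain ⟨v₀, hv₀⟩ := hm
  set A : EuclideanSpace ℝ (Fin m) →L[ℝ] EuclideanSpace ℝ (Fin m) := fderiv ℝ a x with hA
  have hAdet := hdet x hx
  -- A is surjective
  have hAsurj : Function.Surjective A := by
    intro z
    obtain ⟨y, hy⟩ := (LinearMap.equivOfDetNeZero _ hAdet).surjective z
    exact ⟨y, hy⟩
  -- the adjoint A' is injective
  set A' : EuclideanSpace ℝ (Fin m) →L[ℝ] EuclideanSpace ℝ (Fin m) :=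
    ContinuousLinearMap.adjoint A with hA'
  have hA'inj : Function.Injective (A' : EuclideanSpace ℝ (Fin m) →ₗ[ℝ] EuclideanSpace ℝ (Fin m)) := by
    rw [← LinearMap.ker_eq_bot, LinearMap.ker_eq_bot']
    intro u hu
    have hinz : ∀ z : EuclideanSpace ℝ (Fin m), ⟪u, z⟫ = 0 := by
      intro z
      obtain ⟨y, hy⟩ := hAsurj z
      have h1 : ⟪A' u, y⟫ = ⟪u, A y⟫ := ContinuousLinearMap.adjoint_inner_left A y u
      have h0 : A' u = 0 := hu
      rw [h0] at h1
      simp only [inner_zero_left] at h1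
      rw [← hy]; exact h1.symm
    exact inner_self_eq_zero.mp (hinz u)
  have hA'bij : Function.Bijective (A' : EuclideanSpace ℝ (Fin m) →ₗ[ℝ] EuclideanSpace ℝ (Fin m)) :=
    ⟨hA'inj, LinearMap.injective_iff_surjective.mp hA'inj⟩
  let e := (LinearEquiv.ofBijective
    (A' : EuclideanSpace ℝ (Fin m) →ₗ[ℝ] EuclideanSpace ℝ (Fin m)) hA'bij).toContinuousLinearEquiv
  have he : ∀ u : EuclideanSpace ℝ (Fin m), e u = A' u := fun u => rfl
  set N : ℝ := ‖(e.symm : EuclideanSpace ℝ (Fin m) →L[ℝ] EuclideanSpace ℝ (Fin m))‖ with hN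
  have hNbound : ∀ u : EuclideanSpace ℝ (Fin m), ‖u‖ ≤ N * ‖A' u‖ := by
    intro u
    calc ‖u‖ = ‖e.symm (e u)‖ := by rw [e.symm_apply_apply]
    _ ≤ N * ‖e u‖ := (e.symm : EuclideanSpace ℝ (Fin m) →L[ℝ]
        EuclideanSpace ℝ (Fin m)).le_opNorm (e u)
    _ = N * ‖A' u‖ := by rw [he]
  have hNpos : 0 < N := by
    by_contra h
    push_neg at h
    have h1 := hNbound v₀
    have h2 := norm_nonneg (A' v₀)
    rw [hv₀] at h1
    nlinarith
  set c : ℝ := N⁻¹ with hc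
  have hcpos : 0 < c := inv_pos.mpr hNpos
  have hclb : ∀ u : EuclideanSpace ℝ (Fin m), c * ‖u‖ ≤ ‖A' u‖ := by
    intro u
    rw [hc, inv_mul_le_iff₀ hNpos]
    exact hNbound u
  have hdiff : HasFDerivAt a A x := (ha.differentiable one_ne_zero x).hasFDerivAt
  have hlo := hasFDerivAt_iff_isLittleO_nhds_zero.mp hdiff
  have hε : (0:ℝ) < ϱ * c / 2 := by positivity
  have hev := (Asymptotics.isLittleO_iff.mp hlo) hε
  rw [Metric.eventually_nhds_iff] at hev
  obtain ⟨δ, hδpos, hδ⟩ := hev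
  refine ⟨min δ (c / 2), lt_min hδpos (by positivity), ?_⟩
  intro v hv
  have hAvpos : 0 < ‖A' v‖ := by
    have := hclb v; rw [hv, mul_one] at this; linarith
  refine ⟨‖A' v‖⁻¹ • A' v, ?_, ?_⟩
  · rw [norm_smul, norm_inv, norm_norm, inv_mul_cancel₀ hAvpos.ne']
  intro y hy hylt
  set w : EuclideanSpace ℝ (Fin m) := ‖A' v‖⁻¹ • A' v with hw
  have hinner : ⟪y, w⟫ = ‖A' v‖⁻¹ * ⟪y, A' v⟫ := real_inner_smul_right y (A' v) _
  have hadj : ⟪y, A' v⟫ = ⟪A y, v⟫ := by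
    rw [real_inner_comm, ContinuousLinearMap.adjoint_inner_left A y v, real_inner_comm]
  have hAyv : |⟪A y, v⟫| = ‖A' v‖ * |⟪y, w⟫| := by
    rw [hinner, abs_mul, abs_inv, abs_of_nonneg (norm_nonneg _), hadj]
    field_simp
  have hrem : ‖a (x + y) - a x - A y‖ ≤ ϱ * c / 2 * ‖y‖ := by
    have : dist y 0 < δ := by simpa using hylt.trans_le (min_le_left _ _)
    exact hδ this
  have hcone : ‖y‖ ≤ |⟪y, w⟫| / ϱ := (le_div_iff₀ hϱ0).mpr (by linarith [hy])
  have hrem2 : ‖a (x + y) - a x - A y‖ ≤ c / 2 * |⟪y, w⟫| := by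
    calc ‖a (x + y) - a x - A y‖ ≤ ϱ * c / 2 * ‖y‖ := hrem
    _ ≤ ϱ * c / 2 * (|⟪y, w⟫| / ϱ) := by
        apply mul_le_mul_of_nonneg_left hcone (by positivity)
    _ = c / 2 * |⟪y, w⟫| := by field_simp
  have habs : |⟪a (x + y) - a x - A y, v⟫| ≤ c / 2 * |⟪y, w⟫| := by
    calc |⟪a (x + y) - a x - A y, v⟫| ≤ ‖a (x + y) - a x - A y‖ * ‖v‖ :=
      abs_real_inner_le_norm _ _
    _ = ‖a (x + y) - a x - A y‖ := by rw [hv, mul_one]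
    _ ≤ c / 2 * |⟪y, w⟫| := hrem2
  have hsplit : ⟪a (x + y) - a x, v⟫ = ⟪a (x + y) - a x - A y, v⟫ + ⟪A y, v⟫ := by
    rw [← inner_add_left]; congr 1; abel
  have hlb : ‖A' v‖ * |⟪y, w⟫| - c / 2 * |⟪y, w⟫| ≤ |⟪a (x + y) - a x, v⟫| := by
    rw [hsplit, ← hAyv]
    have h3 := abs_sub_abs_le_abs_sub (⟪A y, v⟫) (-⟪a (x + y) - a x - A y, v⟫)
    rw [abs_neg, sub_neg_eq_add] at h3
    have h4 : ⟪A y, v⟫ + ⟪a (x + y) - a x - A y, v⟫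
        = ⟪a (x + y) - a x - A y, v⟫ + ⟪A y, v⟫ := by ring
    rw [h4] at h3
    linarith
  have hcv : c ≤ ‖A' v‖ := by have := hclb v; rwa [hv, mul_one] at this
  have habs0 : 0 ≤ |⟪y, w⟫| := abs_nonneg _
  calc min δ (c / 2) * |⟪y, w⟫| ≤ c / 2 * |⟪y, w⟫| :=
        mul_le_mul_of_nonneg_right (min_le_right _ _) habs0
  _ ≤ ‖A' v‖ * |⟪y, w⟫| - c / 2 * |⟪y, w⟫| := by nlinarith
  _ ≤ |⟪a (x + y) - a x, v⟫| := hlb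
end

section
/- Let a ∈ C¹(ℝ^m, ℝ^m) be such that ∇a(x) is invertible for every x ∈ ℝ^m with sup_{x∈ℝ^m} ‖[∇a(x)]^{−1}‖ < +∞, and such that ∇a is uniformly continuous on ℝ^m. Then a belongs to the class K_1; that is, for every ϱ ∈ (0,1) there exists D > 0 such that for every x ∈ ℝ^m and every v ∈ S_m there exists w = w(x,v) ∈ S_m with |⟨a(x+y) − a(x), v⟩| ≥ D·|⟨y,w⟩| for all y ∈ V(w,ϱ) with ‖y‖ < D. -/
open scoped RealInnerProductSpace
open MeasureTheory Filter Set

/-- If `a ∈ C¹(ℝ^m, ℝ^m)` has everywhere invertible Jacobian with uniformly bounded inverse,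
and the Jacobian is uniformly continuous, then `a` belongs to the class `K₁`. -/
theorem nondeg_uniform_jacobian_mem_K1 (m : ℕ)
    (a : EuclideanSpace ℝ (Fin m) → EuclideanSpace ℝ (Fin m))
    (ha : ContDiff ℝ 1 a)
    (B : EuclideanSpace ℝ (Fin m) → (EuclideanSpace ℝ (Fin m) ≃L[ℝ] EuclideanSpace ℝ (Fin m)))
    (hB : ∀ x, ((B x : EuclideanSpace ℝ (Fin m) →L[ℝ] EuclideanSpace ℝ (Fin m))) = fderiv ℝ a x)
    (hBinv : ∃ M : ℝ, ∀ x,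
      ‖((B x).symm : EuclideanSpace ℝ (Fin m) →L[ℝ] EuclideanSpace ℝ (Fin m))‖ ≤ M)
    (hUC : UniformContinuous (fun x => fderiv ℝ a x)) :
    ∀ ϱ ∈ Set.Ioo (0:ℝ) 1, ∃ D > (0:ℝ),
      ∀ (x v : EuclideanSpace ℝ (Fin m)), ‖v‖ = 1 →
        ∃ w : EuclideanSpace ℝ (Fin m), ‖w‖ = 1 ∧
          ∀ y : EuclideanSpace ℝ (Fin m), ϱ * ‖y‖ ≤ |⟪y, w⟫| → ‖y‖ < D →
            D * |⟪y, w⟫| ≤ |⟪a (x + y) - a x, v⟫| := by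
  obtain ⟨M, hM⟩ := hBinv
  intro ϱ hϱ
  obtain ⟨hϱ0, hϱ1⟩ := hϱ
  set M' : ℝ := max M 1 with hM'def
  have hM'1 : (1:ℝ) ≤ M' := le_max_right _ _
  have hM'0 : (0:ℝ) < M' := lt_of_lt_of_le one_pos hM'1
  set ε : ℝ := ϱ / (2 * M') with hεdef
  have hε0 : 0 < ε := div_pos hϱ0 (by positivity)
  obtain ⟨δ, hδ0, hδ⟩ := Metric.uniformContinuous_iff.mp hUC ε hε0
  set D : ℝ := min δ (1 / (2 * M')) with hDdef
  have hD0 : 0 < D := lt_min hδ0 (by positivity)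
  refine ⟨D, hD0, ?_⟩
  intro x v hv
  set T : EuclideanSpace ℝ (Fin m) →L[ℝ] EuclideanSpace ℝ (Fin m) := fderiv ℝ a x with hT
  set u : EuclideanSpace ℝ (Fin m) := T.adjoint v with hu
  -- lower bound on ‖u‖
  have hunorm : 1 / M' ≤ ‖u‖ := by
    have h1 : (1:ℝ) = ⟪T ((B x).symm v), v⟫ := by
      rw [hT, ← hB x]
      simp only [ContinuousLinearEquiv.coe_coe, ContinuousLinearEquiv.apply_symm_apply]
      rw [real_inner_self_eq_norm_sq, hv]; norm_num
    have h2 : ⟪T ((B x).symm v), v⟫ = ⟪(B x).symm v, u⟫ := by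
      rw [hu, ContinuousLinearMap.adjoint_inner_right]
    have h3 : ⟪(B x).symm v, u⟫ ≤ ‖(B x).symm v‖ * ‖u‖ := real_inner_le_norm _ _
    have h4 : ‖((B x).symm : EuclideanSpace ℝ (Fin m) →L[ℝ] EuclideanSpace ℝ (Fin m)) v‖ ≤ M' := by
      calc ‖((B x).symm : EuclideanSpace ℝ (Fin m) →L[ℝ] EuclideanSpace ℝ (Fin m)) v‖
          ≤ ‖((B x).symm : EuclideanSpace ℝ (Fin m) →L[ℝ] EuclideanSpace ℝ (Fin m))‖ * ‖v‖ :=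
            ContinuousLinearMap.le_opNorm _ _
        _ ≤ M' * 1 := by
            apply mul_le_mul (le_trans (hM x) (le_max_left _ _)) (le_of_eq hv) (norm_nonneg _)
              (le_of_lt hM'0)
        _ = M' := mul_one _
    have h5 : (1:ℝ) ≤ M' * ‖u‖ := by
      calc (1:ℝ) = ⟪(B x).symm v, u⟫ := by rw [h1, h2]
        _ ≤ ‖(B x).symm v‖ * ‖u‖ := h3
        _ ≤ M' * ‖u‖ := by
            exact mul_le_mul_of_nonneg_right h4 (norm_nonneg _)
    rw [div_le_iff₀ hM'0]
    linarith [h5]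
  have hu0 : u ≠ 0 := by
    intro h
    rw [h, norm_zero] at hunorm
    have : (0:ℝ) < 1 / M' := by positivity
    linarith
  have hun0 : (0:ℝ) < ‖u‖ := norm_pos_iff.mpr hu0
  refine ⟨‖u‖⁻¹ • u, norm_smul_inv_norm hu0, ?_⟩
  intro y hy hyD
  set w : EuclideanSpace ℝ (Fin m) := ‖u‖⁻¹ • u with hw
  have hyw : ⟪y, u⟫ = ‖u‖ * ⟪y, w⟫ := by
    rw [hw, real_inner_smul_right]
    field_simp
  -- error estimate
  have herr : ‖a (x + y) - a x - T y‖ ≤ ε * ‖y‖ := by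
    set g : EuclideanSpace ℝ (Fin m) → EuclideanSpace ℝ (Fin m) := fun z => a z - T z with hg
    have hadf : Differentiable ℝ a := ha.differentiable one_ne_zero
    have hgd : ∀ z, DifferentiableAt ℝ g z := fun z => (hadf z).sub (T.differentiableAt)
    have hgf : ∀ z, fderiv ℝ g z = fderiv ℝ a z - T := by
      intro z
      rw [hg]
      rw [fderiv_fun_sub (hadf z) T.differentiableAt, T.fderiv]
    have key : ∀ z ∈ Metric.ball x δ, ‖fderiv ℝ g z‖ ≤ ε := by
      intro z hz
      rw [hgf z, hT]
      have := hδ (a := z) (b := x) (by simpa [dist_eq_norm] using hz)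
      rw [dist_eq_norm] at this
      exact le_of_lt this
    have hxy : x + y ∈ Metric.ball x δ := by
      rw [Metric.mem_ball, dist_eq_norm]
      simp only [add_sub_cancel_left]
      exact lt_of_lt_of_le hyD (min_le_left _ _)
    have hx : x ∈ Metric.ball x δ := Metric.mem_ball_self hδ0
    have := (convex_ball x δ).norm_image_sub_le_of_norm_fderiv_le
      (fun z _ => hgd z) key hx hxy
    calc ‖a (x + y) - a x - T y‖ = ‖g (x + y) - g x‖ := by
          rw [hg]; simp only [map_add]
          congr 1
          abel
      _ ≤ ε * ‖x + y - x‖ := this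
      _ = ε * ‖y‖ := by rw [add_sub_cancel_left]
  -- main estimate
  have hinner : ⟪a (x + y) - a x, v⟫ = ‖u‖ * ⟪y, w⟫ + ⟪a (x + y) - a x - T y, v⟫ := by
    have hTy : ⟪T y, v⟫ = ‖u‖ * ⟪y, w⟫ := by
      rw [← hyw, hu, ← ContinuousLinearMap.adjoint_inner_right]
    calc ⟪a (x + y) - a x, v⟫ = ⟪T y + (a (x + y) - a x - T y), v⟫ := by
          congr 1; abel
      _ = ⟪T y, v⟫ + ⟪a (x + y) - a x - T y, v⟫ := inner_add_left _ _ _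
      _ = ‖u‖ * ⟪y, w⟫ + ⟪a (x + y) - a x - T y, v⟫ := by rw [hTy]
  have herrv : |⟪a (x + y) - a x - T y, v⟫| ≤ ε * ‖y‖ := by
    calc |⟪a (x + y) - a x - T y, v⟫| ≤ ‖a (x + y) - a x - T y‖ * ‖v‖ :=
          abs_real_inner_le_norm _ _
      _ = ‖a (x + y) - a x - T y‖ := by rw [hv, mul_one]
      _ ≤ ε * ‖y‖ := herr
  have hyn : ‖y‖ ≤ |⟪y, w⟫| / ϱ := by
    rw [le_div_iff₀ hϱ0, mul_comm]
    exact hy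
  have habs : ‖u‖ * |⟪y, w⟫| - ε * ‖y‖ ≤ |⟪a (x + y) - a x, v⟫| := by
    have h1 : |‖u‖ * ⟪y, w⟫| = ‖u‖ * |⟪y, w⟫| := by
      rw [abs_mul, abs_of_pos hun0]
    calc ‖u‖ * |⟪y, w⟫| - ε * ‖y‖
        ≤ |‖u‖ * ⟪y, w⟫| - |⟪a (x + y) - a x - T y, v⟫| := by
          rw [h1]; linarith [herrv]
      _ ≤ |‖u‖ * ⟪y, w⟫ + ⟪a (x + y) - a x - T y, v⟫| := by
          have := abs_add_le (‖u‖ * ⟪y, w⟫ + ⟪a (x + y) - a x - T y, v⟫)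
            (-⟪a (x + y) - a x - T y, v⟫)
          simp only [add_neg_cancel_right, abs_neg] at this
          linarith
      _ = |⟪a (x + y) - a x, v⟫| := by rw [hinner]
  -- conclude
  have hεy : ε * ‖y‖ ≤ (1 / (2 * M')) * |⟪y, w⟫| := by
    calc ε * ‖y‖ ≤ ε * (|⟪y, w⟫| / ϱ) := by
          exact mul_le_mul_of_nonneg_left hyn (le_of_lt hε0)
      _ = (1 / (2 * M')) * |⟪y, w⟫| := by
          rw [hεdef]; field_simp
  have hlow : (1 / M') * |⟪y, w⟫| ≤ ‖u‖ * |⟪y, w⟫| :=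
    mul_le_mul_of_nonneg_right hunorm (abs_nonneg _)
  have hD2 : D ≤ 1 / (2 * M') := min_le_right _ _
  calc D * |⟪y, w⟫| ≤ (1 / (2 * M')) * |⟪y, w⟫| :=
        mul_le_mul_of_nonneg_right hD2 (abs_nonneg _)
    _ ≤ ‖u‖ * |⟪y, w⟫| - ε * ‖y‖ := by
        have : (1 / M') * |⟪y, w⟫| = (1 / (2 * M')) * |⟪y, w⟫| + (1 / (2 * M')) * |⟪y, w⟫| := by
          field_simp; ring
        linarith [hlow, hεy]
    _ ≤ |⟪a (x + y) - a x, v⟫| := habs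
end

section
/- Let Π be a Borel measure on ℝ^m satisfying the wide cone condition. Then the cone aperture can be chosen uniformly in the axis: there exists a single ϱ ∈ (0,1) such that Π(V(v,ϱ)) = +∞ for every v ∈ S_m. -/
/-!
Shrinking the aperture of a cone and tilting its axis slightly only enlarges the cone: the
cone of aperture `ϱ` about `v` lies in the cone of aperture `r` about `w` as soon as
`r + ‖v - w‖ ≤ ϱ`. Hence the property "`μ (cone w r) = ⊤`" holds for all `(r, w)` near
`(0, v)` whenever it holds for some positive aperture about `v`, and compactness of the unit
sphere makes the neighbourhood of `r = 0` uniform in the axis.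
-/

open scoped RealInnerProductSpace ENNReal
open MeasureTheory Filter Set Topology

variable {E : Type*} [NormedAddCommGroup E] [InnerProductSpace ℝ E]

/-- The two-sided cone `V(v, ϱ)` of aperture `ϱ` about the axis `v`. -/
def cone (v : E) (ϱ : ℝ) : Set E := {y | ϱ * ‖y‖ ≤ |⟪y, v⟫|}

theorem cone_subset_cone {v w : E} {ϱ r : ℝ} (h : r + ‖v - w‖ ≤ ϱ) :
    cone v ϱ ⊆ cone w r := by
  intro y (hy : ϱ * ‖y‖ ≤ |⟪y, v⟫|)
  have htilt : |⟪y, v⟫| ≤ |⟪y, w⟫| + ‖y‖ * ‖v - w‖ := calc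
    |⟪y, v⟫| ≤ |⟪y, w⟫| + |⟪y, v - w⟫| := by
      rw [inner_sub_right]; linarith [abs_sub_abs_le_abs_sub ⟪y, v⟫ ⟪y, w⟫]
    _ ≤ |⟪y, w⟫| + ‖y‖ * ‖v - w‖ := by gcongr; exact abs_real_inner_le_norm _ _
  show r * ‖y‖ ≤ |⟪y, w⟫|
  nlinarith [mul_le_mul_of_nonneg_right h (norm_nonneg y)]

theorem eventually_measure_cone_eq_top [MeasurableSpace E] {μ : Measure E} {v : E} {ϱ : ℝ} (hϱ : 0 < ϱ)
    (hμ : μ (cone v ϱ) = ⊤) : ∀ᶠ z : ℝ × E in 𝓝 (0, v), μ (cone z.2 z.1) = ⊤ := by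
  have hnear : ∀ᶠ z : ℝ × E in 𝓝 (0, v), z.1 + ‖v - z.2‖ < ϱ :=
    ContinuousAt.eventually_lt (by fun_prop) continuousAt_const (by simpa using hϱ)
  exact hnear.mono fun z hz => measure_mono_top (cone_subset_cone hz.le) hμ

/-- If a measure on `ℝ^m` satisfies the wide cone condition, then the cone aperture can be
chosen uniformly in the axis. -/
theorem wide_cone_uniform_aperture (m : ℕ) (μ : Measure (EuclideanSpace ℝ (Fin m)))
    (hwc : ∀ v : EuclideanSpace ℝ (Fin m), ‖v‖ = 1 →
      ∃ ϱ ∈ Set.Ioo (0:ℝ) 1, μ {y | ϱ * ‖y‖ ≤ |⟪y, v⟫|} = ⊤) :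
    ∃ ϱ ∈ Set.Ioo (0:ℝ) 1, ∀ v : EuclideanSpace ℝ (Fin m), ‖v‖ = 1 →
      μ {y | ϱ * ‖y‖ ≤ |⟪y, v⟫|} = ⊤ := by
  have hlocal : ∀ v ∈ Metric.sphere (0 : EuclideanSpace ℝ (Fin m)) 1,
      ∀ᶠ z : ℝ × EuclideanSpace ℝ (Fin m) in 𝓝 (0, v), μ (cone z.2 z.1) = ⊤ := by
    intro v hv
    obtain ⟨ϱ, hϱ, hμ⟩ := hwc v (mem_sphere_zero_iff_norm.1 hv)
    exact eventually_measure_cone_eq_top hϱ.1 hμ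
  have huniform : ∀ᶠ r in 𝓝[>] (0 : ℝ), ∀ v ∈ Metric.sphere (0 : EuclideanSpace ℝ (Fin m)) 1,
      μ (cone v r) = ⊤ :=
    ((isCompact_sphere _ _).eventually_forall_of_forall_eventually hlocal).filter_mono
      nhdsWithin_le_nhds
  obtain ⟨r, hr, hr01⟩ := (huniform.and (Ioo_mem_nhdsGT one_pos)).exists
  exact ⟨r, hr01, fun v hv => hr v (mem_sphere_zero_iff_norm.2 hv)⟩
end

section
/- Let Π = Σ_{n≥1} n·δ_{1/n!} be the measure on ℝ assigning mass n to the point 1/n!. Then for every integer r ≥ 1, lim_{ε→0+} [ε^r·ln(1/ε)]^{−1} · Σ_{n=1}^∞ n·(min(1/n!, ε))^r = +∞; that is, the upper order index ρ_r of Π equals +∞ for every r ∈ ℕ. -/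
open MeasureTheory Filter Set

lemma gauss_sum_real (N : ℕ) : ∑ n ∈ Finset.range N, ((n : ℝ) + 1) = N * (N + 1) / 2 := by
  induction N with
  | zero => simp
  | succ k ih => rw [Finset.sum_range_succ, ih]; push_cast; ring

lemma summable_aux (r : ℕ) (hr : 1 ≤ r) (ε : ℝ) (hε : 0 < ε) :
    Summable (fun n : ℕ => ((n : ℝ) + 1) * (min (1 / (Nat.factorial (n + 1) : ℝ)) ε) ^ r) := by
  have hsum : Summable (fun n : ℕ => 1 / (Nat.factorial n : ℝ)) := by
    simpa using Real.summable_pow_div_factorial 1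
  refine Summable.of_nonneg_of_le (fun n => ?_) (fun n => ?_) hsum
  · have h1 : (0:ℝ) < 1 / (Nat.factorial (n + 1) : ℝ) := by positivity
    have : (0:ℝ) ≤ min (1 / (Nat.factorial (n + 1) : ℝ)) ε := le_min h1.le hε.le
    positivity
  · have h1 : (0:ℝ) < 1 / (Nat.factorial (n + 1) : ℝ) := by positivity
    have hmin0 : (0:ℝ) ≤ min (1 / (Nat.factorial (n + 1) : ℝ)) ε := le_min h1.le hε.le
    have h2 : (min (1 / (Nat.factorial (n + 1) : ℝ)) ε) ^ r ≤ (1 / (Nat.factorial (n + 1) : ℝ)) ^ r :=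
      pow_le_pow_left₀ hmin0 (min_le_left _ _) r
    have h3 : (1 / (Nat.factorial (n + 1) : ℝ)) ^ r ≤ (1 / (Nat.factorial (n + 1) : ℝ)) ^ 1 := by
      apply pow_le_pow_of_le_one h1.le _ hr
      rw [div_le_one (by positivity)]
      exact_mod_cast Nat.one_le_iff_ne_zero.mpr (Nat.factorial_ne_zero _)
    have h4 : ((n : ℝ) + 1) * (1 / (Nat.factorial (n + 1) : ℝ)) = 1 / (Nat.factorial n : ℝ) := by
      rw [Nat.factorial_succ]
      push_cast
      field_simp
    calc ((n : ℝ) + 1) * (min (1 / (Nat.factorial (n + 1) : ℝ)) ε) ^ r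
        ≤ ((n : ℝ) + 1) * (1 / (Nat.factorial (n + 1) : ℝ)) ^ 1 := by
          apply mul_le_mul_of_nonneg_left (h2.trans h3) (by positivity)
      _ = 1 / (Nat.factorial n : ℝ) := by rw [pow_one, h4]

/-- For the measure `Π = Σ_{n≥1} n·δ_{1/n!}`, the upper order index `ρ_r` equals `+∞`
for every power `r ≥ 1`. -/
theorem order_index_factorial_infinite (r : ℕ) (hr : 1 ≤ r) :
    Tendsto (fun ε : ℝ =>
        (ε ^ r * Real.log (1 / ε))⁻¹ *
          ∑' n : ℕ, ((n : ℝ) + 1) * (min (1 / (Nat.factorial (n + 1) : ℝ)) ε) ^ r)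
      (nhdsWithin 0 (Set.Ioi 0)) atTop := by
  rw [tendsto_atTop]
  intro M
  set C : ℝ := max M 1 with hC
  have hC1 : (1:ℝ) ≤ C := le_max_right _ _
  have hC0 : (0:ℝ) < C := lt_of_lt_of_le one_pos hC1
  have hMC : M ≤ C := le_max_left _ _
  -- log x ≤ x/(4C) eventually
  have hlittle := Real.isLittleO_log_id_atTop.bound (c := 1 / (4 * C)) (by positivity)
  rw [eventually_atTop] at hlittle
  obtain ⟨x₀, hx₀⟩ := hlittle
  set N₀ : ℕ := max (⌈x₀⌉₊) 2 with hN₀def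
  have hN₀2 : 2 ≤ N₀ := le_max_right _ _
  have hlog : ∀ N : ℕ, N₀ ≤ N → Real.log ((N:ℝ) + 1) ≤ ((N:ℝ) + 1) / (4 * C) := by
    intro N hN
    have hxN : x₀ ≤ (N:ℝ) + 1 := by
      have : x₀ ≤ (⌈x₀⌉₊ : ℝ) := Nat.le_ceil x₀
      have h2 : (⌈x₀⌉₊ : ℝ) ≤ (N:ℝ) := by
        exact_mod_cast le_trans (le_max_left _ 2) hN
      linarith
    have := hx₀ ((N:ℝ) + 1) hxN
    rw [Real.norm_eq_abs, Real.norm_eq_abs, id] at this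
    have habs : |(N:ℝ) + 1| = (N:ℝ) + 1 := abs_of_nonneg (by positivity)
    rw [habs] at this
    calc Real.log ((N:ℝ) + 1) ≤ |Real.log ((N:ℝ) + 1)| := le_abs_self _
      _ ≤ 1 / (4 * C) * ((N:ℝ) + 1) := this
      _ = ((N:ℝ) + 1) / (4 * C) := by ring
  have hfac0 : (0:ℝ) < (Nat.factorial N₀ : ℝ) := by positivity
  filter_upwards [Ioc_mem_nhdsGT_of_mem (Set.left_mem_Ico.mpr (by positivity : (0:ℝ) < 1 / (Nat.factorial N₀ : ℝ)))] with ε hε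
  obtain ⟨hε0, hεδ⟩ := hε
  -- find N
  have hex : ∃ n : ℕ, 1 / (Nat.factorial (n + 1) : ℝ) < ε := by
    obtain ⟨n, hn⟩ := exists_nat_gt (1 / ε)
    refine ⟨n, ?_⟩
    have hfn : (1:ℝ) / ε < (Nat.factorial (n+1) : ℝ) := by
      have : (n:ℝ) + 1 ≤ (Nat.factorial (n+1) : ℝ) := by
        exact_mod_cast Nat.self_le_factorial (n+1)
      linarith
    calc 1 / (Nat.factorial (n + 1) : ℝ) < 1 / (1 / ε) := by
          apply one_div_lt_one_div_of_lt (by positivity) hfn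
      _ = ε := one_div_one_div ε
  classical
  set N : ℕ := Nat.find hex with hNdef
  have hlow : 1 / (Nat.factorial (N + 1) : ℝ) < ε := Nat.find_spec hex
  have hhigh : ∀ n < N, ε ≤ 1 / (Nat.factorial (n + 1) : ℝ) := by
    intro n hn
    have := Nat.find_min hex hn
    linarith [not_lt.mp this]
  have hNN₀ : N₀ ≤ N := by
    by_contra h
    push_neg at h
    have h1 : N + 1 ≤ N₀ := h
    have : (Nat.factorial (N+1) : ℝ) ≤ (Nat.factorial N₀ : ℝ) := by
      exact_mod_cast Nat.factorial_le h1
    have : 1 / (Nat.factorial N₀ : ℝ) ≤ 1 / (Nat.factorial (N+1) : ℝ) :=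
      one_div_le_one_div_of_le (by positivity) this
    linarith
  have hN2 : 2 ≤ N := le_trans hN₀2 hNN₀
  have hNpos : (0:ℝ) < N := by exact_mod_cast lt_of_lt_of_le two_pos hN2
  -- ε ≤ 1/2 < 1
  have hε1 : ε < 1 := by
    have h2 : (2:ℝ) ≤ (Nat.factorial N₀ : ℝ) := by
      exact_mod_cast le_trans hN₀2 (Nat.self_le_factorial N₀)
    have : 1 / (Nat.factorial N₀ : ℝ) ≤ 1 / 2 := one_div_le_one_div_of_le two_pos h2
    linarith
  have hlogε : 0 < Real.log (1 / ε) := Real.log_pos (by rw [lt_div_iff₀ hε0]; linarith)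
  -- tsum lower bound
  have hsummable := summable_aux r hr ε hε0
  have hpartial : ε ^ r * ((N:ℝ) * (N + 1) / 2) ≤
      ∑' n : ℕ, ((n : ℝ) + 1) * (min (1 / (Nat.factorial (n + 1) : ℝ)) ε) ^ r := by
    have hle : ∑ n ∈ Finset.range N, ((n : ℝ) + 1) * (min (1 / (Nat.factorial (n + 1) : ℝ)) ε) ^ r ≤
        ∑' n : ℕ, ((n : ℝ) + 1) * (min (1 / (Nat.factorial (n + 1) : ℝ)) ε) ^ r := by
      refine Summable.sum_le_tsum _ (fun n _ => ?_) hsummable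
      have h1 : (0:ℝ) < 1 / (Nat.factorial (n + 1) : ℝ) := by positivity
      have : (0:ℝ) ≤ min (1 / (Nat.factorial (n + 1) : ℝ)) ε := le_min h1.le hε0.le
      positivity
    have heq : ∑ n ∈ Finset.range N, ((n : ℝ) + 1) * (min (1 / (Nat.factorial (n + 1) : ℝ)) ε) ^ r
        = ε ^ r * ((N:ℝ) * (N + 1) / 2) := by
      have : ∀ n ∈ Finset.range N, ((n : ℝ) + 1) * (min (1 / (Nat.factorial (n + 1) : ℝ)) ε) ^ r
          = ((n : ℝ) + 1) * ε ^ r := by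
        intro n hn
        rw [min_eq_right (hhigh n (Finset.mem_range.mp hn))]
      rw [Finset.sum_congr rfl this, ← Finset.sum_mul, gauss_sum_real]
      ring
    linarith
  -- log(1/ε) bound
  have hlogbound : Real.log (1 / ε) ≤ ((N:ℝ) + 1) * Real.log ((N:ℝ) + 1) := by
    have h1 : 1 / ε < (Nat.factorial (N + 1) : ℝ) := by
      rw [div_lt_iff₀ hε0]
      rw [div_lt_iff₀ (by positivity : (0:ℝ) < (Nat.factorial (N+1) : ℝ))] at hlow
      linarith [hlow]
    have h2 : Real.log (1 / ε) ≤ Real.log ((Nat.factorial (N + 1) : ℝ)) :=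
      Real.log_le_log (by positivity) h1.le
    have h3 : (Nat.factorial (N + 1) : ℝ) ≤ ((N:ℝ) + 1) ^ (N + 1) := by
      exact_mod_cast Nat.factorial_le_pow (N + 1)
    have h4 : Real.log ((Nat.factorial (N + 1) : ℝ)) ≤ Real.log (((N:ℝ) + 1) ^ (N + 1)) :=
      Real.log_le_log (by positivity) h3
    rw [Real.log_pow] at h4
    push_cast at h4
    linarith
  -- final
  have hA : 0 < ε ^ r * Real.log (1 / ε) := mul_pos (pow_pos hε0 r) hlogε
  have key : M * Real.log (1 / ε) ≤ (N:ℝ) * (N + 1) / 2 := by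
    have hl := hlog N hNN₀
    have hlogN : 0 ≤ Real.log ((N:ℝ) + 1) := Real.log_nonneg (by linarith)
    calc M * Real.log (1 / ε) ≤ C * Real.log (1 / ε) :=
          mul_le_mul_of_nonneg_right hMC hlogε.le
      _ ≤ C * (((N:ℝ) + 1) * Real.log ((N:ℝ) + 1)) :=
          mul_le_mul_of_nonneg_left hlogbound hC0.le
      _ ≤ C * (((N:ℝ) + 1) * (((N:ℝ) + 1) / (4 * C))) := by
          apply mul_le_mul_of_nonneg_left _ hC0.le
          exact mul_le_mul_of_nonneg_left hl (by positivity)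
      _ = ((N:ℝ) + 1) * ((N:ℝ) + 1) / 4 := by field_simp
      _ ≤ (N:ℝ) * (N + 1) / 2 := by
          have hN1 : (1:ℝ) ≤ (N:ℝ) := by exact_mod_cast le_trans one_le_two hN2
          nlinarith [hN1]
  calc M = (M * Real.log (1 / ε)) / Real.log (1 / ε) := by field_simp
    _ ≤ ((N:ℝ) * (N + 1) / 2) / Real.log (1 / ε) := by gcongr
    _ = (ε ^ r * Real.log (1 / ε))⁻¹ * (ε ^ r * ((N:ℝ) * (N + 1) / 2)) := by
        rw [mul_inv]
        field_simp
    _ ≤ (ε ^ r * Real.log (1 / ε))⁻¹ *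
          ∑' n : ℕ, ((n : ℝ) + 1) * (min (1 / (Nat.factorial (n + 1) : ℝ)) ε) ^ r :=
        mul_le_mul_of_nonneg_left hpartial (inv_nonneg.mpr hA.le)
end

section
/- lim_{N→∞} Σ_{n=1}^∞ n·(1 − cos(2π·N!/n!)) = 0. (Note that for n ≤ N the summand vanishes since N!/n! is an integer, and the tail Σ_{n>N} n·(1 − cos(2π·N!/n!)) tends to zero.) -/
open MeasureTheory Filter Set

private lemma one_sub_cos_le {x : ℝ} (hx : 0 ≤ x) : 1 - Real.cos x ≤ x := by
  rcases le_or_gt x 2 with h | h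
  · nlinarith [Real.one_sub_sq_div_two_le_cos (x := x)]
  · nlinarith [Real.neg_one_le_cos x]

private lemma fact_bound (N i : ℕ) :
    Nat.factorial N * (N + 1) ^ (i + 1) ≤ Nat.factorial (i + N + 1) := by
  induction i with
  | zero =>
    have h : Nat.factorial (0 + N + 1) = (N + 1) * Nat.factorial N := by
      rw [Nat.zero_add, Nat.factorial_succ]
    have h2 : Nat.factorial N * (N + 1) ^ (0 + 1) = (N + 1) * Nat.factorial N := by ring
    rw [h, h2]
  | succ i ih =>
    have e : i + 1 + N + 1 = (i + N + 1) + 1 := by omega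
    rw [e, Nat.factorial_succ]
    calc Nat.factorial N * (N + 1) ^ (i + 1 + 1)
        = (N + 1) * (Nat.factorial N * (N + 1) ^ (i + 1)) := by ring
      _ ≤ (N + 1) * Nat.factorial (i + N + 1) := Nat.mul_le_mul_left _ ih
      _ ≤ (i + N + 1 + 1) * Nat.factorial (i + N + 1) :=
          Nat.mul_le_mul_right _ (by omega)

private lemma nat_key (N i : ℕ) (hN : 1 ≤ N) :
    (i + N + 1) * ((N + 1) * 2 ^ i) ≤ ((N + 1) ^ (i + 1)) ^ 2 := by
  have h1 : i + 1 ≤ 2 ^ i := Nat.lt_two_pow_self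
  have h2 : 2 ^ i ≤ (N + 1) ^ i := Nat.pow_le_pow_left (by omega) i
  calc (i + N + 1) * ((N + 1) * 2 ^ i)
      ≤ ((i + 1) * (N + 1)) * ((N + 1) * 2 ^ i) := by
        apply Nat.mul_le_mul_right
        nlinarith
    _ ≤ (2 ^ i * (N + 1)) * ((N + 1) * 2 ^ i) := by
        apply Nat.mul_le_mul_right
        exact Nat.mul_le_mul_right _ h1
    _ ≤ ((N + 1) ^ i * (N + 1)) * ((N + 1) * (N + 1) ^ i) :=
        Nat.mul_le_mul (Nat.mul_le_mul_right _ h2) (Nat.mul_le_mul_left _ h2)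
    _ = ((N + 1) ^ (i + 1)) ^ 2 := by ring

/-- The key computation in the "hidden hypoellipticity" example: for the Lévy measure
`Π = Σ_{n≥1} n·δ_{1/n!}`, one has `Σ_{n≥1} n·(1 − cos(2π·N!/n!)) → 0` as `N → ∞`. -/
theorem factorial_char_sum_tendsto_zero :
    Tendsto (fun N : ℕ =>
        ∑' n : ℕ, ((n : ℝ) + 1) *
          (1 - Real.cos (2 * Real.pi * (Nat.factorial N : ℝ) / (Nat.factorial (n + 1) : ℝ))))
      atTop (nhds 0) := by
  have hπ : (0 : ℝ) < Real.pi := Real.pi_pos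
  set f : ℕ → ℕ → ℝ := fun N n => ((n : ℝ) + 1) *
      (1 - Real.cos (2 * Real.pi * (Nat.factorial N : ℝ) / (Nat.factorial (n + 1) : ℝ)))
    with hf
  have hfpos : ∀ n : ℕ, (0 : ℝ) < (Nat.factorial n : ℝ) := fun n => by
    exact_mod_cast Nat.factorial_pos n
  have hxnn : ∀ N n : ℕ,
      (0 : ℝ) ≤ 2 * Real.pi * (Nat.factorial N : ℝ) / (Nat.factorial (n + 1) : ℝ) := by
    intro N n
    positivity
  have hnonneg : ∀ N n, 0 ≤ f N n := by
    intro N n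
    apply mul_nonneg (by positivity)
    linarith [Real.cos_le_one (2 * Real.pi * (Nat.factorial N : ℝ) / (Nat.factorial (n + 1) : ℝ))]
  have hle : ∀ N n, f N n ≤ 2 * Real.pi * (Nat.factorial N : ℝ) / (Nat.factorial n : ℝ) := by
    intro N n
    have h1 : f N n ≤ ((n : ℝ) + 1) *
        (2 * Real.pi * (Nat.factorial N : ℝ) / (Nat.factorial (n + 1) : ℝ)) :=
      mul_le_mul_of_nonneg_left (one_sub_cos_le (hxnn N n)) (by positivity)
    have h2 : ((Nat.factorial (n + 1) : ℕ) : ℝ) = ((n : ℝ) + 1) * (Nat.factorial n : ℝ) := by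
      push_cast [Nat.factorial_succ]
      ring
    refine h1.trans (le_of_eq ?_)
    rw [h2]
    have hn1 : ((n : ℝ) + 1) ≠ 0 := by positivity
    field_simp
  have hsum : ∀ N, Summable (f N) := by
    intro N
    refine Summable.of_nonneg_of_le (hnonneg N) (hle N) ?_
    have := (Real.summable_pow_div_factorial 1).mul_left (2 * Real.pi * (Nat.factorial N : ℝ))
    simpa [one_pow, mul_one_div, div_eq_mul_inv, mul_assoc] using this
  have hbound : ∀ N : ℕ, 1 ≤ N →
      (∑' n, f N n) ≤ 4 * Real.pi ^ 2 / ((N : ℝ) + 1) := by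
    intro N hN
    rw [← Summable.sum_add_tsum_nat_add N (hsum N)]
    have hzero : ∀ i ∈ Finset.range N, f N i = 0 := by
      intro i hi
      have hiN : i + 1 ≤ N := Finset.mem_range.mp hi
      obtain ⟨k, hk⟩ := Nat.factorial_dvd_factorial hiN
      have harg : 2 * Real.pi * (Nat.factorial N : ℝ) / (Nat.factorial (i + 1) : ℝ)
          = (k : ℝ) * (2 * Real.pi) := by
        rw [hk]
        push_cast
        field_simp [ne_of_gt (hfpos (i + 1))]
      simp only [hf, harg, Real.cos_nat_mul_two_pi, sub_self, mul_zero]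
    rw [Finset.sum_eq_zero hzero, zero_add]
    have hgsum : Summable (fun i : ℕ => (2 * Real.pi ^ 2 / ((N : ℝ) + 1)) * (1 / 2) ^ i) :=
      summable_geometric_two.mul_left _
    have hterm : ∀ i : ℕ, f N (i + N) ≤ (2 * Real.pi ^ 2 / ((N : ℝ) + 1)) * (1 / 2) ^ i := by
      intro i
      set a : ℝ := (Nat.factorial N : ℝ) / (Nat.factorial (i + N + 1) : ℝ) with ha
      have ha0 : 0 ≤ a := by positivity
      have hx : 2 * Real.pi * (Nat.factorial N : ℝ) / (Nat.factorial (i + N + 1) : ℝ)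
          = 2 * Real.pi * a := by
        rw [ha]; ring
      have hcos : 1 - Real.cos (2 * Real.pi * a) ≤ (2 * Real.pi * a) ^ 2 / 2 := by
        nlinarith [Real.one_sub_sq_div_two_le_cos (x := 2 * Real.pi * a)]
      have hb : a ≤ 1 / ((N : ℝ) + 1) ^ (i + 1) := by
        rw [ha, div_le_div_iff₀ (hfpos _) (by positivity)]
        have h := fact_bound N i
        have h' : (Nat.factorial N : ℝ) * ((N : ℝ) + 1) ^ (i + 1)
            ≤ (Nat.factorial (i + N + 1) : ℝ) := by exact_mod_cast h
        linarith
      have hkey : ((i : ℝ) + N + 1) * a ^ 2 ≤ 1 / (((N : ℝ) + 1) * 2 ^ i) := by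
        have h1 : ((i : ℝ) + N + 1) * a ^ 2
            ≤ ((i : ℝ) + N + 1) * (1 / ((N : ℝ) + 1) ^ (i + 1)) ^ 2 := by
          apply mul_le_mul_of_nonneg_left _ (by positivity)
          exact pow_le_pow_left₀ ha0 hb 2
        refine h1.trans ?_
        have h2 : ((i : ℝ) + N + 1) * (((N : ℝ) + 1) * 2 ^ i)
            ≤ ((((N : ℝ) + 1) ^ (i + 1)) ^ 2) := by exact_mod_cast nat_key N i hN
        rw [div_pow, one_pow, mul_one_div, div_le_div_iff₀ (by positivity) (by positivity)]
        linarith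
      have hfeq : f N (i + N) = ((i : ℝ) + (N : ℝ) + 1) * (1 - Real.cos (2 * Real.pi * a)) := by
        simp only [hf, hx]
        push_cast
        ring
      calc f N (i + N) = ((i : ℝ) + N + 1) * (1 - Real.cos (2 * Real.pi * a)) := hfeq
        _ ≤ ((i : ℝ) + N + 1) * ((2 * Real.pi * a) ^ 2 / 2) :=
            mul_le_mul_of_nonneg_left hcos (by positivity)
        _ = 2 * Real.pi ^ 2 * (((i : ℝ) + N + 1) * a ^ 2) := by ring
        _ ≤ 2 * Real.pi ^ 2 * (1 / (((N : ℝ) + 1) * 2 ^ i)) :=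
            mul_le_mul_of_nonneg_left hkey (by positivity)
        _ = (2 * Real.pi ^ 2 / ((N : ℝ) + 1)) * (1 / 2) ^ i := by
            rw [div_pow, one_pow]
            field_simp
    calc (∑' i, f N (i + N)) ≤ ∑' i, (2 * Real.pi ^ 2 / ((N : ℝ) + 1)) * (1 / 2) ^ i :=
          Summable.tsum_le_tsum hterm ((summable_nat_add_iff N).mpr (hsum N)) hgsum
      _ = (2 * Real.pi ^ 2 / ((N : ℝ) + 1)) * 2 := by
          rw [tsum_mul_left, tsum_geometric_two]
      _ = 4 * Real.pi ^ 2 / ((N : ℝ) + 1) := by ring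
  have h0 : Tendsto (fun N : ℕ => 4 * Real.pi ^ 2 / ((N : ℝ) + 1)) atTop (nhds 0) := by
    have := tendsto_one_div_add_atTop_nhds_zero_nat.const_mul (4 * Real.pi ^ 2)
    simpa [div_eq_mul_inv] using this
  exact squeeze_zero' (Eventually.of_forall fun N => tsum_nonneg (hnonneg N))
    (eventually_atTop.mpr ⟨1, fun N hN => hbound N hN⟩) h0
end

section
/- Let Π be a Borel measure on ℝ^m, let a : ℝ^m → ℝ^m be continuous, let x* ∈ ℝ^m and ε* > 0, and suppose that for every x with ‖x − x*‖ ≤ ε* and every v ∈ ℝ^m \ {0}, Π({u : ⟨a(x+u) − a(x), v⟩ ≠ 0}) = +∞. Then γ_n := inf { Π({u : ‖u‖ ≥ 1/n and ⟨a(x+u) − a(x), v⟩ ≠ 0}) : ‖x − x*‖ ≤ ε*, v ∈ ℝ^m \ {0} } tends to +∞ as n → ∞. -/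
/-!
For fixed `r > 0` the jump mass `(x, v) ↦ Π {u | r ≤ ‖u‖, ⟪a (x + u) - a x, v⟫ ≠ 0}` is lower
semicontinuous (Fatou's lemma along sequences, using the continuity of `a`); along `r = 1/(n+1)`
it increases in `n` to `Π {u | ⟪a (x + u) - a x, v⟫ ≠ 0} = ∞`. On the compact set
`closedBall x* ε* × sphere 0 1` a Dini-type argument makes this divergence uniform, and rescaling
`v` onto the unit sphere does not change the jump mass.
-/

open scoped RealInnerProductSpace ENNReal Topology
open MeasureTheory Filter Set

theorem IsCompact.tendsto_biInf_nhds_top_of_monotone {α X ι : Type*} [CompleteLinearOrder α]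
    [DenselyOrdered α] [TopologicalSpace α] [OrderTopology α] [TopologicalSpace X]
    [Preorder ι] [IsDirectedOrder ι] [Nonempty ι] {K : Set X} (hK : IsCompact K)
    {f : ι → X → α} (hf : Monotone f) (hlsc : ∀ i, LowerSemicontinuous (f i))
    (htop : ∀ x ∈ K, Tendsto (f · x) atTop (𝓝 ⊤)) :
    Tendsto (fun i => ⨅ x ∈ K, f i x) atTop (𝓝 ⊤) := by
  refine tendsto_order.2 ⟨fun b hb => ?_, fun b hb => (not_top_lt hb).elim⟩
  -- Strict bounds `c < f i x` on `K` only give `c ≤ ⨅ x ∈ K, f i x`; hence an intermediate `c`.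
  obtain ⟨c, hbc, hc⟩ := exists_between hb
  obtain ⟨i, hi⟩ : ∃ i, K ⊆ f i ⁻¹' Ioi c :=
    hK.elim_directed_cover _ (fun i => lowerSemicontinuous_iff_isOpen_preimage.1 (hlsc i) c)
      (fun x hx => mem_iUnion.2 ((htop x hx).eventually (eventually_gt_nhds hc)).exists)
      (Monotone.directed_le fun i j hij x hx => lt_of_lt_of_le hx (hf hij x))
  filter_upwards [eventually_ge_atTop i] with j hj
  exact hbc.trans_le (le_iInf₂ fun x hx => (hi hx).le.trans (hf hj x))

theorem lowerSemicontinuous_measure_of_isOpen_setOf_mem {X Ω : Type*} [TopologicalSpace X]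
    [FirstCountableTopology X] [MeasurableSpace Ω] (μ : Measure Ω) {s : X → Set Ω}
    (hs : ∀ u, IsOpen {p | u ∈ s p}) : LowerSemicontinuous fun p => μ (s p) := by
  intro p y hy
  by_contra hfreq
  obtain ⟨q, hq, hqy⟩ := exists_seq_forall_of_frequently (not_eventually.1 hfreq)
  have hsub : s p ⊆ ⋃ k, ⋂ j ≥ k, s (q j) := fun u hu =>
    let ⟨k, hk⟩ := eventually_atTop.1 (hq.eventually ((hs u).mem_nhds hu))
    mem_iUnion.2 ⟨k, mem_iInter₂.2 hk⟩
  have hmono : Monotone fun k => ⋂ j ≥ k, s (q j) :=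
    fun k l hkl => biInter_mono (fun j hj => hkl.trans hj) fun _ _ => subset_rfl
  refine hy.not_ge ?_
  calc μ (s p) ≤ μ (⋃ k, ⋂ j ≥ k, s (q j)) := measure_mono hsub
    _ = ⨆ k, μ (⋂ j ≥ k, s (q j)) := hmono.directed_le.measure_iUnion
    _ ≤ y := iSup_le fun k => (measure_mono (biInter_subset_of_mem le_rfl)).trans (not_lt.1 (hqy k))

section JumpMass

variable {E F : Type*} [NormedAddCommGroup E] [MeasurableSpace E] [NormedAddCommGroup F]
  [InnerProductSpace ℝ F] (μ : Measure E) (a : E → F)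

def jumpMass (r : ℝ) (x : E) (v : F) : ℝ≥0∞ :=
  μ {u | r ≤ ‖u‖ ∧ ⟪a (x + u) - a x, v⟫ ≠ 0}

theorem jumpMass_antitone (x : E) (v : F) : Antitone fun r => jumpMass μ a r x v :=
  fun _ _ hrs => measure_mono fun _ hu => ⟨hrs.trans hu.1, hu.2⟩

theorem jumpMass_smul {c : ℝ} (hc : c ≠ 0) (r : ℝ) (x : E) (v : F) :
    jumpMass μ a r x (c • v) = jumpMass μ a r x v := by
  simp [jumpMass, real_inner_smul_right, hc]

theorem lowerSemicontinuous_jumpMass {a : E → F} (ha : Continuous a) (r : ℝ) :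
    LowerSemicontinuous fun p : E × F => jumpMass μ a r p.1 p.2 := by
  refine lowerSemicontinuous_measure_of_isOpen_setOf_mem μ fun u => ?_
  have hcont : Continuous fun p : E × F => ⟪a (p.1 + u) - a p.1, p.2⟫ :=
    ((ha.comp (continuous_fst.add continuous_const)).sub (ha.comp continuous_fst)).inner
      continuous_snd
  exact isOpen_const.inter (isOpen_ne_fun hcont continuous_const)

theorem tendsto_jumpMass_one_div (x : E) (v : F) :
    Tendsto (fun n : ℕ => jumpMass μ a (1 / (n + 1)) x v) atTop
      (𝓝 (μ {u | ⟪a (x + u) - a x, v⟫ ≠ 0})) := by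
  have hmono : Monotone fun n : ℕ => {u | 1 / ((n : ℝ) + 1) ≤ ‖u‖ ∧ ⟪a (x + u) - a x, v⟫ ≠ 0} :=
    fun n k hnk u hu => ⟨le_trans (Nat.one_div_le_one_div hnk) hu.1, hu.2⟩
  have hunion : ⋃ n : ℕ, {u | 1 / ((n : ℝ) + 1) ≤ ‖u‖ ∧ ⟪a (x + u) - a x, v⟫ ≠ 0} =
      {u | ⟪a (x + u) - a x, v⟫ ≠ 0} := by
    refine Subset.antisymm (iUnion_subset fun _ _ hu => hu.2) fun u hu => ?_
    have hu0 : 0 < ‖u‖ := norm_pos_iff.2 fun h0 => hu (by simp [h0])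
    obtain ⟨n, hn⟩ := exists_nat_one_div_lt hu0
    exact mem_iUnion.2 ⟨n, hn.le, hu⟩
  have := tendsto_measure_iUnion_atTop (μ := μ) hmono
  rwa [hunion] at this

end JumpMass

theorem uniform_jump_mass_tendsto_top_general (m : ℕ)
    (μ : Measure (EuclideanSpace ℝ (Fin m)))
    (a : EuclideanSpace ℝ (Fin m) → EuclideanSpace ℝ (Fin m)) (ha : Continuous a)
    (xs : EuclideanSpace ℝ (Fin m)) (εs : ℝ)
    (h : ∀ x : EuclideanSpace ℝ (Fin m), ‖x - xs‖ ≤ εs →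
      ∀ v : EuclideanSpace ℝ (Fin m), v ≠ 0 →
        μ {u | ⟪a (x + u) - a x, v⟫ ≠ 0} = ⊤) :
    Tendsto (fun n : ℕ =>
        ⨅ (x : EuclideanSpace ℝ (Fin m)) (_ : ‖x - xs‖ ≤ εs)
          (v : EuclideanSpace ℝ (Fin m)) (_ : v ≠ 0),
          μ {u | 1 / (n : ℝ) ≤ ‖u‖ ∧ ⟪a (x + u) - a x, v⟫ ≠ 0})
      atTop (nhds ⊤) := by
  set K := Metric.closedBall xs εs ×ˢ Metric.sphere (0 : EuclideanSpace ℝ (Fin m)) 1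
  have hK : IsCompact K := (isCompact_closedBall xs εs).prod (isCompact_sphere 0 1)
  have htop : ∀ p ∈ K, Tendsto (fun n : ℕ => jumpMass μ a (1 / (n + 1)) p.1 p.2) atTop (𝓝 ⊤) :=
    fun p hp => h p.1 (mem_closedBall_iff_norm.1 hp.1) p.2 (ne_zero_of_mem_unit_sphere ⟨_, hp.2⟩) ▸
      tendsto_jumpMass_one_div μ a p.1 p.2
  have hdini : Tendsto (fun n : ℕ => ⨅ p ∈ K, jumpMass μ a (1 / (n + 1)) p.1 p.2) atTop (𝓝 ⊤) :=
    hK.tendsto_biInf_nhds_top_of_monotone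
      (fun _ _ hnk p => jumpMass_antitone μ a p.1 p.2 (Nat.one_div_le_one_div hnk))
      (fun _ => lowerSemicontinuous_jumpMass μ ha _) htop
  -- `1 / (0 : ℝ) = 0`, so the `n = 0` term is the full jump mass and the sequence only
  -- becomes monotone from `n = 1` on.
  rw [← tendsto_add_atTop_iff_nat 1]
  refine tendsto_nhds_top_mono' hdini fun n => le_iInf₂ fun x hx => le_iInf₂ fun v hv => ?_
  calc ⨅ p ∈ K, jumpMass μ a (1 / (n + 1)) p.1 p.2
      ≤ jumpMass μ a (1 / (n + 1)) x (‖v‖⁻¹ • v) :=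
        iInf₂_le (x, ‖v‖⁻¹ • v) ⟨mem_closedBall_iff_norm.2 hx, by simp [norm_smul, hv]⟩
    _ = _ := by rw [jumpMass_smul μ a (inv_ne_zero (norm_ne_zero_iff.2 hv))]; simp [jumpMass]

/-- Dini-type lemma: under condition (1.11) in a ball around `x*`, the uniform (over the ball
and over directions) mass of jumps of size `≥ 1/n` that move `a` tends to infinity. -/
theorem uniform_jump_mass_tendsto_top (m : ℕ)
    (μ : Measure (EuclideanSpace ℝ (Fin m)))
    (a : EuclideanSpace ℝ (Fin m) → EuclideanSpace ℝ (Fin m)) (ha : Continuous a)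
    (xs : EuclideanSpace ℝ (Fin m)) (εs : ℝ) (hεs : 0 < εs)
    (h : ∀ x : EuclideanSpace ℝ (Fin m), ‖x - xs‖ ≤ εs →
      ∀ v : EuclideanSpace ℝ (Fin m), v ≠ 0 →
        μ {u | ⟪a (x + u) - a x, v⟫ ≠ 0} = ⊤) :
    Tendsto (fun n : ℕ =>
        ⨅ (x : EuclideanSpace ℝ (Fin m)) (_ : ‖x - xs‖ ≤ εs)
          (v : EuclideanSpace ℝ (Fin m)) (_ : v ≠ 0),
          μ {u | 1 / (n : ℝ) ≤ ‖u‖ ∧ ⟪a (x + u) - a x, v⟫ ≠ 0})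
      atTop (nhds ⊤) :=
  uniform_jump_mass_tendsto_top_general m μ a ha xs εs h
end
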